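/- arXiv:1502.01822 — 3 statements merged into one kernel-verified Lean document; each statement's English description precedes it below -/
import Mathlib

section
/- Let A ∈ ℂ^{m×n} be a matrix, let y ∈ ℝ^m have nonnegative entries, and let x_l ∈ ℂ^n. Define z_l ∈ ℂ^m by z_{l,r} = √(y_r) · phase((A x_l)_r) for r = 1,…,m. If x_{l+1} ∈ ℂ^n minimizes the function x ↦ ‖A x − z_l‖₂ over ℂ^n, then ‖ |A x_{l+1}| − √y ‖₂ ≤ ‖ |A x_l| − √y ‖₂, where |v| denotes the vector of entrywise complex moduli and √y the entrywise square root. (Residual reduction property of the Error Reduction algorithm.) -/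
/-! Entrywise, `|‖w‖ - s| ≤ ‖w - s u‖` for every unimodular `u`, with equality for `u = phase w`.
Hence `z_l` is the point of the modulus set closest to `A x_l`, so the residual at `x_l` equals
`‖A x_l - z_l‖`, which the minimiser `x_{l+1}` can only decrease, while the residual at `x_{l+1}`
is bounded by `‖A x_{l+1} - z_l‖`. -/

open scoped BigOperators ComplexConjugate

/-- phase(w) = w/|w| if w ≠ 0, else 1. -/
noncomputable def phase (w : ℂ) : ℂ := if w = 0 then 1 else w / (‖w‖ : ℂ)

/-- Euclidean norm of a complex vector. -/
noncomputable def evnorm {ι : Type*} [Fintype ι] (v : ι → ℂ) : ℝ :=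
  Real.sqrt (∑ i, ‖v i‖ ^ 2)

/-- Euclidean norm of a real vector. -/
noncomputable def rvnorm {ι : Type*} [Fintype ι] (v : ι → ℝ) : ℝ :=
  Real.sqrt (∑ i, (v i) ^ 2)

/-- Standard Hermitian inner product, conjugate-linear in the first argument. -/
noncomputable def hinner {n : ℕ} (a x : Fin n → ℂ) : ℂ := ∑ i, conj (a i) * x i

/-- dist(x, x̂) = min over unimodular ω of ‖x − ω·x̂‖₂. -/
noncomputable def pdist {n : ℕ} (x xhat : Fin n → ℂ) : ℝ :=
  ⨅ ω : {ω : ℂ // ‖ω‖ = 1}, evnorm (x - (ω : ℂ) • xhat)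

/-- Operator (spectral) norm of a complex matrix w.r.t. Euclidean norms. -/
noncomputable def matOpNorm {ι κ : Type*} [Fintype ι] [Fintype κ] [DecidableEq κ]
    (M : Matrix ι κ ℂ) : ℝ :=
  ‖LinearMap.toContinuousLinearMap (Matrix.toEuclideanLin M)‖

lemma norm_phase (w : ℂ) : ‖phase w‖ = 1 := by
  unfold phase
  split_ifs with h
  · simp
  · simp [h]

lemma norm_mul_phase (w : ℂ) : (‖w‖ : ℂ) * phase w = w := by
  unfold phase
  split_ifs with h
  · simp [h]
  · field_simp [h]

lemma norm_sub_ofReal_mul_phase (w : ℂ) (s : ℝ) :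
    ‖w - s * phase w‖ = |‖w‖ - s| := by
  have h : w - s * phase w = ((‖w‖ - s : ℝ) : ℂ) * phase w := by
    push_cast
    rw [sub_mul, norm_mul_phase]
  rw [h, norm_mul, norm_phase, mul_one, Complex.norm_real, Real.norm_eq_abs]

lemma abs_norm_sub_le_norm_sub_ofReal_mul (w u : ℂ) (hu : ‖u‖ = 1) {s : ℝ} (hs : 0 ≤ s) :
    |‖w‖ - s| ≤ ‖w - s * u‖ := by
  simpa [hu, abs_of_nonneg hs] using abs_norm_sub_norm_le w (s * u)

section

variable {ι : Type*} [Fintype ι] {v : ι → ℝ} {w : ι → ℂ}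

lemma rvnorm_le_evnorm (h : ∀ i, |v i| ≤ ‖w i‖) : rvnorm v ≤ evnorm w :=
  Real.sqrt_le_sqrt <| Finset.sum_le_sum fun i _ =>
    sq_abs (v i) ▸ pow_le_pow_left₀ (abs_nonneg _) (h i) 2

lemma rvnorm_eq_evnorm (h : ∀ i, |v i| = ‖w i‖) : rvnorm v = evnorm w := by
  simp only [rvnorm, evnorm, ← h, sq_abs]

lemma rvnorm_norm_sub_le_evnorm_sub (w u : ι → ℂ) (hu : ∀ i, ‖u i‖ = 1) {s : ι → ℝ}
    (hs : ∀ i, 0 ≤ s i) : rvnorm (fun i => ‖w i‖ - s i) ≤ evnorm (w - fun i => s i * u i) :=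
  rvnorm_le_evnorm fun i => abs_norm_sub_le_norm_sub_ofReal_mul (w i) (u i) (hu i) (hs i)

lemma rvnorm_norm_sub_eq_evnorm_sub_phase (w : ι → ℂ) (s : ι → ℝ) :
    rvnorm (fun i => ‖w i‖ - s i) = evnorm (w - fun i => s i * phase (w i)) :=
  rvnorm_eq_evnorm fun i => (norm_sub_ofReal_mul_phase (w i) (s i)).symm

end

theorem stmt0_general {m n : ℕ} (A : Matrix (Fin m) (Fin n) ℂ) (y : Fin m → ℝ)
    (xl : Fin n → ℂ) (zl : Fin m → ℂ)
    (hz : zl = fun r => (Real.sqrt (y r) : ℂ) * phase (A.mulVec xl r))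
    (xnext : Fin n → ℂ)
    (hmin : ∀ x : Fin n → ℂ,
      evnorm (A.mulVec xnext - zl) ≤ evnorm (A.mulVec x - zl)) :
    rvnorm (fun r => ‖A.mulVec xnext r‖ - Real.sqrt (y r)) ≤
      rvnorm (fun r => ‖A.mulVec xl r‖ - Real.sqrt (y r)) := by
  subst hz
  calc rvnorm (fun r => ‖A.mulVec xnext r‖ - Real.sqrt (y r))
      ≤ evnorm (A.mulVec xnext - fun r => Real.sqrt (y r) * phase (A.mulVec xl r)) :=
        rvnorm_norm_sub_le_evnorm_sub _ _ (fun r => norm_phase _) fun r => Real.sqrt_nonneg _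
    _ ≤ evnorm (A.mulVec xl - fun r => Real.sqrt (y r) * phase (A.mulVec xl r)) := hmin xl
    _ = rvnorm (fun r => ‖A.mulVec xl r‖ - Real.sqrt (y r)) :=
        (rvnorm_norm_sub_eq_evnorm_sub_phase _ _).symm

/-- Residual reduction property of the Error Reduction algorithm. -/
theorem stmt0 {m n : ℕ} (A : Matrix (Fin m) (Fin n) ℂ) (y : Fin m → ℝ)
    (hy : ∀ r, 0 ≤ y r) (xl : Fin n → ℂ) (zl : Fin m → ℂ)
    (hz : zl = fun r => (Real.sqrt (y r) : ℂ) * phase (A.mulVec xl r))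
    (xnext : Fin n → ℂ)
    (hmin : ∀ x : Fin n → ℂ,
      evnorm (A.mulVec xnext - zl) ≤ evnorm (A.mulVec x - zl)) :
    rvnorm (fun r => ‖A.mulVec xnext r‖ - Real.sqrt (y r)) ≤
      rvnorm (fun r => ‖A.mulVec xl r‖ - Real.sqrt (y r)) :=
  stmt0_general A y xl zl hz xnext hmin
end

section
/- Let A_i ∈ ℂ^{p×n} and A_j ∈ ℂ^{q×n}, let C ∈ ℂ^{(p+q)×n} be their vertical concatenation, and assume C has full row rank p+q ≤ n and A_i A_jᴴ = 0. Let y_i ∈ ℝ^p and y_j ∈ ℝ^q have nonnegative entries and let y = [y_i; y_j]. For any x_0 ∈ ℂ^n define x_1 = x_0 + A_i†(√(y_i) ⊙ phase(A_i x_0) − A_i x_0), x_2 = x_1 + A_j†(√(y_j) ⊙ phase(A_j x_1) − A_j x_1), and x_{12} = x_0 + C†(√y ⊙ phase(C x_0) − C x_0), where M† = Mᴴ(MMᴴ)^{-1} and phase is applied entrywise. Then x_2 = x_{12}: applying two iterations of the block Kaczmarz method to the two blocks one after another equals one iteration applied to their concatenation. -/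
open scoped BigOperators ComplexConjugate

/-!
Because `Aᵢ Aⱼᴴ = 0`, the Gram matrix `C Cᴴ` is block diagonal, so `C† = [Aᵢ†, Aⱼ†]` and the
concatenated step is the sum of the two block corrections, each computed from `x₀`. In the
sequential scheme the second correction is computed from `x₁` instead, but `x₁ - x₀` lies in the
range of `Aᵢᴴ`, which `Aⱼ` annihilates, so `Aⱼ x₁ = Aⱼ x₀` and the two corrections agree.
-/

open Matrix

section PseudoInverse

variable {R : Type*} [CommRing R] [StarRing R] {m m₁ m₂ n : Type*} [Fintype n]

/-- `M† = Mᴴ (M Mᴴ)⁻¹`; this is the Moore–Penrose pseudo-inverse only when `M` has full row rank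
(otherwise `(M Mᴴ)⁻¹ = 0`). -/
noncomputable def rightPinv [Fintype m] [DecidableEq m] (M : Matrix m n R) : Matrix n m R :=
  Mᴴ * (M * Mᴴ)⁻¹

theorem mul_rightPinv_eq_zero [Fintype m₁] [DecidableEq m₁] {A : Matrix m₁ n R}
    {B : Matrix m₂ n R} (hBA : B * Aᴴ = 0) :
    B * rightPinv A = 0 := by
  rw [rightPinv, ← Matrix.mul_assoc, hBA, Matrix.zero_mul]

theorem fromRows_mul_conjTranspose_fromRows {A : Matrix m₁ n R} {B : Matrix m₂ n R}
    (hAB : A * Bᴴ = 0) :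
    fromRows A B * (fromRows A B)ᴴ = fromBlocks (A * Aᴴ) 0 0 (B * Bᴴ) := by
  have hBA : B * Aᴴ = 0 := by simpa using congrArg conjTranspose hAB
  rw [conjTranspose_fromRows_eq_fromCols_conjTranspose, fromRows_mul_fromCols, hAB, hBA]

theorem rightPinv_fromRows [Fintype m₁] [Fintype m₂] [DecidableEq m₁] [DecidableEq m₂]
    {A : Matrix m₁ n R} {B : Matrix m₂ n R} (hAB : A * Bᴴ = 0)
    (hfull : IsUnit (fromRows A B * (fromRows A B)ᴴ)) :
    rightPinv (fromRows A B) = fromCols (rightPinv A) (rightPinv B) := by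
  rw [fromRows_mul_conjTranspose_fromRows hAB] at hfull
  obtain ⟨hA, hB⟩ := isUnit_fromBlocks_zero₂₁.mp hfull
  rw [rightPinv, fromRows_mul_conjTranspose_fromRows hAB,
    inv_fromBlocks_zero₂₁_of_isUnit_iff _ _ _ (iff_of_true hA hB),
    conjTranspose_fromRows_eq_fromCols_conjTranspose, fromCols_mul_fromBlocks]
  simp [rightPinv]

end PseudoInverse

section Kaczmarz

variable {m m₁ m₂ n : Type*}

noncomputable def kaczmarzResidual (y : m → ℝ) (v : m → ℂ) : m → ℂ :=
  fun r => (Real.sqrt (y r) : ℂ) * phase (v r) - v r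

noncomputable def kaczmarzStep [Fintype m] [DecidableEq m] [Fintype n] (A : Matrix m n ℂ)
    (y : m → ℝ) (x : n → ℂ) : n → ℂ :=
  x + rightPinv A *ᵥ kaczmarzResidual y (A *ᵥ x)

theorem kaczmarzResidual_sumElim (y₁ : m₁ → ℝ) (y₂ : m₂ → ℝ) (v₁ : m₁ → ℂ) (v₂ : m₂ → ℂ) :
    kaczmarzResidual (Sum.elim y₁ y₂) (Sum.elim v₁ v₂)
      = Sum.elim (kaczmarzResidual y₁ v₁) (kaczmarzResidual y₂ v₂) := by
  ext (r | r) <;> rfl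

theorem mulVec_kaczmarzStep_of_mul_conjTranspose_eq_zero [Fintype m₁] [DecidableEq m₁]
    [Fintype n] {A : Matrix m₁ n ℂ} {B : Matrix m₂ n ℂ} (hBA : B * Aᴴ = 0) (y : m₁ → ℝ) (x : n → ℂ) :
    B *ᵥ kaczmarzStep A y x = B *ᵥ x := by
  rw [kaczmarzStep, mulVec_add, mulVec_mulVec, mul_rightPinv_eq_zero hBA, zero_mulVec, add_zero]

theorem kaczmarzStep_fromRows [Fintype m₁] [Fintype m₂] [DecidableEq m₁] [DecidableEq m₂]
    [Fintype n] {A : Matrix m₁ n ℂ} {B : Matrix m₂ n ℂ} (hAB : A * Bᴴ = 0)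
    (hfull : IsUnit (fromRows A B * (fromRows A B)ᴴ)) (y₁ : m₁ → ℝ) (y₂ : m₂ → ℝ) (x : n → ℂ) :
    kaczmarzStep (fromRows A B) (Sum.elim y₁ y₂) x
      = kaczmarzStep B y₂ (kaczmarzStep A y₁ x) := by
  have hBA : B * Aᴴ = 0 := by simpa using congrArg conjTranspose hAB
  conv_rhs =>
    rw [kaczmarzStep, mulVec_kaczmarzStep_of_mul_conjTranspose_eq_zero hBA, kaczmarzStep]
  rw [kaczmarzStep, rightPinv_fromRows hAB hfull, fromRows_mulVec, kaczmarzResidual_sumElim,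
    fromCols_mulVec_sumElim, add_assoc]

end Kaczmarz

theorem stmt6_general {p q n : ℕ} (Ai : Matrix (Fin p) (Fin n) ℂ) (Aj : Matrix (Fin q) (Fin n) ℂ)
    (C : Matrix (Fin p ⊕ Fin q) (Fin n) ℂ) (hC : C = Matrix.fromRows Ai Aj)
    (hfull : IsUnit (C * C.conjTranspose))
    (horth : Ai * Aj.conjTranspose = 0)
    (yi : Fin p → ℝ) (yj : Fin q → ℝ)
    (y : Fin p ⊕ Fin q → ℝ) (hy : y = Sum.elim yi yj)
    (x0 x1 x2 x12 : Fin n → ℂ)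
    (hx1 : x1 = x0 + (Ai.conjTranspose * (Ai * Ai.conjTranspose)⁻¹).mulVec
      (fun r => (Real.sqrt (yi r) : ℂ) * phase (Ai.mulVec x0 r) - Ai.mulVec x0 r))
    (hx2 : x2 = x1 + (Aj.conjTranspose * (Aj * Aj.conjTranspose)⁻¹).mulVec
      (fun r => (Real.sqrt (yj r) : ℂ) * phase (Aj.mulVec x1 r) - Aj.mulVec x1 r))
    (hx12 : x12 = x0 + (C.conjTranspose * (C * C.conjTranspose)⁻¹).mulVec
      (fun r => (Real.sqrt (y r) : ℂ) * phase (C.mulVec x0 r) - C.mulVec x0 r)) :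
    x2 = x12 := by
  subst hC hy hx1 hx2 hx12
  exact (kaczmarzStep_fromRows horth hfull yi yj x0).symm

/-- Two successive block Kaczmarz iterations on orthogonal blocks equal
one iteration on the concatenated block. -/
theorem stmt6 {p q n : ℕ} (Ai : Matrix (Fin p) (Fin n) ℂ) (Aj : Matrix (Fin q) (Fin n) ℂ)
    (C : Matrix (Fin p ⊕ Fin q) (Fin n) ℂ) (hC : C = Matrix.fromRows Ai Aj)
    (hpq : p + q ≤ n) (hfull : IsUnit (C * C.conjTranspose))
    (horth : Ai * Aj.conjTranspose = 0)
    (yi : Fin p → ℝ) (yj : Fin q → ℝ) (hyi : ∀ r, 0 ≤ yi r) (hyj : ∀ r, 0 ≤ yj r)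
    (y : Fin p ⊕ Fin q → ℝ) (hy : y = Sum.elim yi yj)
    (x0 x1 x2 x12 : Fin n → ℂ)
    (hx1 : x1 = x0 + (Ai.conjTranspose * (Ai * Ai.conjTranspose)⁻¹).mulVec
      (fun r => (Real.sqrt (yi r) : ℂ) * phase (Ai.mulVec x0 r) - Ai.mulVec x0 r))
    (hx2 : x2 = x1 + (Aj.conjTranspose * (Aj * Aj.conjTranspose)⁻¹).mulVec
      (fun r => (Real.sqrt (yj r) : ℂ) * phase (Aj.mulVec x1 r) - Aj.mulVec x1 r))
    (hx12 : x12 = x0 + (C.conjTranspose * (C * C.conjTranspose)⁻¹).mulVec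
      (fun r => (Real.sqrt (y r) : ℂ) * phase (C.mulVec x0 r) - C.mulVec x0 r)) :
    x2 = x12 :=
  stmt6_general Ai Aj C hC hfull horth yi yj y hy x0 x1 x2 x12 hx1 hx2 hx12
end

section
/- Let A ∈ ℂ^{m×n} have rows a_1ᴴ,…,a_mᴴ with ‖a_r‖₂ = 1 for all r (A is standardized). Let x̂ ∈ ℂ^n, let y ∈ ℂ^m be defined by y_r = ⟨a_r, x̂⟩, let e ∈ ℂ^m, and let x ∈ ℂ^n be arbitrary. For each r define the Kaczmarz update for the perturbed system, x^r = x + (y_r + e_r − ⟨a_r, x⟩)·a_r. Let σ ≥ 0 satisfy ‖A v‖₂ ≥ σ‖v‖₂ for all v ∈ ℂ^n. Then (1/m) Σ_{r=1}^m ‖x^r − x̂‖₂² ≤ (1 − σ²/m)·‖x − x̂‖₂² + max_{1≤r≤m} |e_r|². (One-step expected error bound for the randomized Kaczmarz method with uniform row selection applied to an inconsistent linear system.) -/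
open scoped BigOperators ComplexConjugate

/-! Write `d = x - x̂`. The error after the update along row `r` is
`d - (⟨a_r, d⟩ - e_r) • a_r`; since `‖a_r‖ = 1`, the vector `d - ⟨a_r, d⟩ • a_r` is orthogonal
to `a_r`, and Pythagoras gives `‖x^r - x̂‖² = ‖d‖² - |⟨a_r, d⟩|² + |e_r|²`. Summing over `r`,
`∑ |⟨a_r, d⟩|² = ‖A d‖² ≥ σ² ‖d‖²` and `∑ |e_r|² ≤ m · max |e_r|²`. -/

open scoped InnerProductSpace

section UnitVector

variable {𝕜 E : Type*} [RCLike 𝕜] [NormedAddCommGroup E] [InnerProductSpace 𝕜 E]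
  {a : E}

lemma inner_sub_inner_smul_self_of_norm_eq_one (ha : ‖a‖ = 1) (d : E) :
    ⟪a, d - ⟪a, d⟫_𝕜 • a⟫_𝕜 = 0 := by
  rw [inner_sub_right, inner_smul_right, inner_self_eq_norm_sq_to_K, ha]
  simp

lemma norm_sub_inner_smul_sub_smul_sq_of_norm_eq_one (ha : ‖a‖ = 1) (d : E) (c : 𝕜) :
    ‖d - (⟪a, d⟫_𝕜 - c) • a‖ ^ 2 = ‖d‖ ^ 2 - ‖⟪a, d⟫_𝕜‖ ^ 2 + ‖c‖ ^ 2 := by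
  have hperp : ∀ s : 𝕜, ⟪d - ⟪a, d⟫_𝕜 • a, s • a⟫_𝕜 = 0 := fun s => by
    rw [inner_smul_right, ← inner_conj_symm, inner_sub_inner_smul_self_of_norm_eq_one ha]
    simp
  have pythagoras : ∀ s : 𝕜, ‖d - ⟪a, d⟫_𝕜 • a + s • a‖ ^ 2
      = ‖d - ⟪a, d⟫_𝕜 • a‖ ^ 2 + ‖s‖ ^ 2 := fun s => by
    rw [sq, sq, sq, norm_add_sq_eq_norm_sq_add_norm_sq_of_inner_eq_zero _ _ (hperp s),
      norm_smul, ha, mul_one]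
  have hd := pythagoras ⟪a, d⟫_𝕜
  rw [sub_add_cancel] at hd
  rw [show d - (⟪a, d⟫_𝕜 - c) • a = d - ⟪a, d⟫_𝕜 • a + c • a by module,
    pythagoras, hd]
  ring

lemma norm_kaczmarz_update_sub_sq (ha : ‖a‖ = 1) (x xhat : E) (c : 𝕜) :
    ‖x + (⟪a, xhat⟫_𝕜 + c - ⟪a, x⟫_𝕜) • a - xhat‖ ^ 2
      = ‖x - xhat‖ ^ 2 - ‖⟪a, x - xhat⟫_𝕜‖ ^ 2 + ‖c‖ ^ 2 := by
  rw [← norm_sub_inner_smul_sub_smul_sq_of_norm_eq_one ha, inner_sub_right]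
  congr 2
  module

end UnitVector

lemma evnorm_sq {ι : Type*} [Fintype ι] (v : ι → ℂ) : evnorm v ^ 2 = ∑ i, ‖v i‖ ^ 2 :=
  Real.sq_sqrt (by positivity)

lemma evnorm_eq_norm_toLp {ι : Type*} [Fintype ι] (v : ι → ℂ) :
    evnorm v = ‖WithLp.toLp 2 v‖ := by
  simp [evnorm, EuclideanSpace.norm_eq]

lemma hinner_eq_inner_toLp {n : ℕ} (a x : Fin n → ℂ) :
    hinner a x = ⟪WithLp.toLp 2 a, WithLp.toLp 2 x⟫_ℂ := by
  simp [hinner, PiLp.inner_apply, mul_comm]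

lemma evnorm_kaczmarz_update_sub_sq {n : ℕ} {a : Fin n → ℂ} (ha : evnorm a = 1)
    (x xhat : Fin n → ℂ) (c : ℂ) :
    evnorm (x + (hinner a xhat + c - hinner a x) • a - xhat) ^ 2
      = evnorm (x - xhat) ^ 2 - ‖hinner a (x - xhat)‖ ^ 2 + ‖c‖ ^ 2 := by
  rw [evnorm_eq_norm_toLp] at ha ⊢
  simp only [hinner_eq_inner_toLp, evnorm_eq_norm_toLp, WithLp.toLp_add, WithLp.toLp_sub,
    WithLp.toLp_smul]
  exact norm_kaczmarz_update_sub_sq ha _ _ c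

lemma sq_mul_evnorm_sq_le_sum_norm_sq {ι κ : Type*} [Fintype ι] [Fintype κ]
    {A : (ι → ℂ) → κ → ℂ} {σ : ℝ}
    (hσ : 0 ≤ σ) (hA : ∀ v, σ * evnorm v ≤ evnorm (A v)) (v : ι → ℂ) :
    σ ^ 2 * evnorm v ^ 2 ≤ ∑ r, ‖A v r‖ ^ 2 := by
  rw [← evnorm_sq, ← mul_pow]
  exact pow_le_pow_left₀ (mul_nonneg hσ (Real.sqrt_nonneg _)) (hA v) 2

lemma sum_le_card_mul_ciSup {ι : Type*} [Fintype ι] (f : ι → ℝ) :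
    ∑ i, f i ≤ Fintype.card ι * ⨆ i, f i := by
  rw [← nsmul_eq_mul]
  exact Finset.sum_le_card_nsmul _ _ _ fun i _ => le_ciSup (Set.finite_range f).bddAbove i

/-- One-step expected error bound for the randomized Kaczmarz method with
uniform row selection applied to an inconsistent linear system. -/
theorem stmt9 {m n : ℕ} (a : Fin m → Fin n → ℂ) (ha : ∀ r, evnorm (a r) = 1)
    (xhat : Fin n → ℂ) (y : Fin m → ℂ) (hy : ∀ r, y r = hinner (a r) xhat)
    (e : Fin m → ℂ) (x : Fin n → ℂ) (σ : ℝ) (hσ : 0 ≤ σ)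
    (hsing : ∀ v : Fin n → ℂ, σ * evnorm v ≤ evnorm (fun r => hinner (a r) v)) :
    (1 / (m : ℝ)) * ∑ r, evnorm ((x + (y r + e r - hinner (a r) x) • a r) - xhat) ^ 2 ≤
      (1 - σ ^ 2 / (m : ℝ)) * evnorm (x - xhat) ^ 2 + ⨆ r, ‖e r‖ ^ 2 := by
  rcases Nat.eq_zero_or_pos m with rfl | hm
  · simp only [Nat.cast_zero, div_zero, sub_zero, one_mul, zero_mul, Real.iSup_of_isEmpty,
      add_zero]
    positivity
  have hrow : ∀ r, evnorm ((x + (y r + e r - hinner (a r) x) • a r) - xhat) ^ 2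
      = evnorm (x - xhat) ^ 2 - ‖hinner (a r) (x - xhat)‖ ^ 2 + ‖e r‖ ^ 2 := fun r => by
    rw [hy, evnorm_kaczmarz_update_sub_sq (ha r)]
  have hsum : ∑ r, evnorm ((x + (y r + e r - hinner (a r) x) • a r) - xhat) ^ 2
      = m * evnorm (x - xhat) ^ 2 - ∑ r, ‖hinner (a r) (x - xhat)‖ ^ 2 + ∑ r, ‖e r‖ ^ 2 := by
    simp only [hrow, Finset.sum_add_distrib, Finset.sum_sub_distrib, Finset.sum_const,
      Finset.card_univ, Fintype.card_fin, nsmul_eq_mul]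
  have hA := sq_mul_evnorm_sq_le_sum_norm_sq hσ hsing (x - xhat)
  have he := sum_le_card_mul_ciSup fun r => ‖e r‖ ^ 2
  rw [Fintype.card_fin] at he
  have hm' : (0 : ℝ) < m := Nat.cast_pos.mpr hm
  have hscale : (m : ℝ) * ((1 - σ ^ 2 / m) * evnorm (x - xhat) ^ 2)
      = m * evnorm (x - xhat) ^ 2 - σ ^ 2 * evnorm (x - xhat) ^ 2 := by
    field_simp
  rw [hsum, one_div, inv_mul_le_iff₀ hm', mul_add, hscale]
  linarith
end
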